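/- Let α > 0 be fixed and let λ : ℕ → ℝ_{>0} satisfy λ(n)·n^{1+α}/(log n)^α → ∞ as n → ∞ (i.e. λ ∈ ω(n^{−1−α}·log(n)^α)). For each n, let T_n be the survival time of the clique infection chain on {0,…,n} with parameters λ(n), α, started at X₀ = 1. Then there exists a constant c > 0 such that for all sufficiently large n, E[T_n] ≥ 2^{cn}. -/

import Mathlib

/-!
If `f` is bounded, vanishes at `0` and satisfies `f ≤ 1 + P f` elsewhere (`P` the transition
operator), then `E[T] ≥ f(1)`. Take for `f` the scale function of the chain on `{0, …, m}`,
`m = n / 2`, with increments `W(i) = ∏_{i<j<m} b(j)/j` (`b` the birth rate, `j` the death rate),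
frozen above `m`. Then `f(1) = W(0) = ∏_{0<j<m} λ j^α (n - j) ≥ (λ n / 2)^N (N!)^α` with
`N = m - 1`, and `N! ≥ (N/e)^N` gives `W(0) ≥ q^N` for `q = (λ n / 2) (N/e)^α`. Since
`λ n^{1+α} ≥ (log n)^α` and `n ≤ 4N`, `q ≥ (1/2) (log n / (4e))^α`, which is `≥ 2` for
large `n`.
-/

open scoped ENNReal
open Filter Asymptotics

noncomputable def markovDist {S : Type*} [DecidableEq S] (step : S → S → ℝ≥0∞) (s0 : S) :
    ℕ → S → ℝ≥0∞
  | 0 => fun J => if J = s0 then 1 else 0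
  | t + 1 => fun J => ∑' s : S, markovDist step s0 t s * step s J

open Classical in
noncomputable def absorbStep {S : Type*} (A : Set S) (step : S → S → ℝ≥0∞) :
    S → S → ℝ≥0∞ :=
  fun s => if s ∈ A then (fun J => if J = s then 1 else 0) else step s

noncomputable def hitProb {S : Type*} [DecidableEq S] (step : S → S → ℝ≥0∞) (s0 : S)
    (A : Set S) : ℝ≥0∞ :=
  ⨆ t : ℕ, ∑' s : S, A.indicator (markovDist (absorbStep A step) s0 t) s

noncomputable def cliqueStep (n : ℕ) (lam alpha : ℝ) (I : ℕ) : ℕ → ℝ≥0∞ :=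
  if I = 0 ∨ n < I then fun J => if J = I then 1 else 0
  else fun J =>
    if J = I + 1 then
      ENNReal.ofReal (lam * (I : ℝ) ^ (1 + alpha) * ((n : ℝ) - I) /
        (lam * (I : ℝ) ^ (1 + alpha) * ((n : ℝ) - I) + I))
    else if J = I - 1 then
      ENNReal.ofReal ((I : ℝ) /
        (lam * (I : ℝ) ^ (1 + alpha) * ((n : ℝ) - I) + I))
    else 0

noncomputable def cliqueDist (n : ℕ) (lam alpha : ℝ) (x0 : ℕ) : ℕ → ℕ → ℝ≥0∞ :=
  markovDist (cliqueStep n lam alpha) x0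

noncomputable def cliqueET (n : ℕ) (lam alpha : ℝ) (x0 : ℕ) : ℝ≥0∞ :=
  ∑' t : ℕ, (1 - cliqueDist n lam alpha x0 t 0)

open Topology

section MarkovChain

variable {S : Type*} [DecidableEq S] {step : S → S → ℝ≥0∞}

theorem tsum_markovDist_succ_mul (s0 : S) (t : ℕ) (f : S → ℝ≥0∞) :
    ∑' s, markovDist step s0 (t + 1) s * f s =
      ∑' s, markovDist step s0 t s * ∑' J, step s J * f J := by
  calc ∑' s, (∑' r, markovDist step s0 t r * step r s) * f s
      = ∑' s, ∑' r, markovDist step s0 t r * step r s * f s := by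
        simp_rw [ENNReal.tsum_mul_right]
    _ = ∑' r, ∑' s, markovDist step s0 t r * step r s * f s := ENNReal.tsum_comm
    _ = _ := by simp_rw [mul_assoc, ENNReal.tsum_mul_left]

theorem tsum_markovDist_zero_mul (s0 : S) (f : S → ℝ≥0∞) :
    ∑' s, markovDist step s0 0 s * f s = f s0 := by
  simp [markovDist, ite_mul]

theorem tsum_markovDist_le_one (hstep : ∀ s, ∑' J, step s J ≤ 1) (s0 : S) (t : ℕ) :
    ∑' s, markovDist step s0 t s ≤ 1 := by
  induction t with
  | zero => simp [markovDist]
  | succ t ih =>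
    calc ∑' s, markovDist step s0 (t + 1) s
        = ∑' s, markovDist step s0 t s * ∑' J, step s J := by
          simpa using tsum_markovDist_succ_mul s0 t 1
      _ ≤ ∑' s, markovDist step s0 t s * 1 := by gcongr with s; exact hstep s
      _ ≤ 1 := by simpa using ih

theorem tsum_ite_eq_zero_le_one_sub {d : S → ℝ≥0∞} (hd : ∑' s, d s ≤ 1) (o : S) :
    ∑' s, (if s = o then 0 else d s) ≤ 1 - d o := by
  refine ENNReal.le_sub_of_add_le_left (ne_top_of_le_ne_top ENNReal.one_ne_top
    ((ENNReal.le_tsum o).trans hd)) ?_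
  rwa [← ENNReal.summable.tsum_eq_add_tsum_ite' o]

/-- Telescoping `E f(X_t) ≤ P(X_t ≠ o) + E f(X_{t+1})`; the remainder
`E f(X_T) ≤ M P(X_T ≠ o)` tends to `0` once the expected time outside `o` is finite. -/
theorem le_tsum_one_sub_markovDist (hstep : ∀ s, ∑' J, step s J ≤ 1) {o : S}
    {f : S → ℝ≥0∞} {M : ℝ≥0∞} (hM : M ≠ ⊤) (hfM : ∀ s, f s ≤ M) (hfo : f o = 0)
    (hsub : ∀ s, s ≠ o → f s ≤ 1 + ∑' J, step s J * f J) (s0 : S) :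
    f s0 ≤ ∑' t, (1 - markovDist step s0 t o) := by
  set d := markovDist step s0
  set E : ℕ → ℝ≥0∞ := fun t => ∑' s, d t s * f s
  have hsub' : ∀ s, f s ≤ (if s = o then 0 else 1) + ∑' J, step s J * f J := by
    intro s
    split_ifs with hs
    · simp [hs, hfo]
    · exact hsub s hs
  have hE_succ_eq : ∀ t, E (t + 1) = ∑' s, d t s * ∑' J, step s J * f J :=
    fun t => tsum_markovDist_succ_mul s0 t f
  have hE_succ : ∀ t, E t ≤ (1 - d t o) + E (t + 1) := fun t =>
    calc E t ≤ ∑' s, ((if s = o then 0 else d t s) + d t s * ∑' J, step s J * f J) := by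
          refine ENNReal.tsum_le_tsum fun s => ?_
          calc d t s * f s ≤ d t s * ((if s = o then 0 else 1) + ∑' J, step s J * f J) := by
                gcongr; exact hsub' s
            _ = _ := by split_ifs <;> ring
      _ = ∑' s, (if s = o then 0 else d t s) + E (t + 1) := by
          rw [ENNReal.tsum_add, hE_succ_eq]
      _ ≤ (1 - d t o) + E (t + 1) := by
          gcongr
          exact tsum_ite_eq_zero_le_one_sub (tsum_markovDist_le_one hstep s0 t) o
  have hE_le : ∀ t, E t ≤ M * (1 - d t o) := fun t =>
    calc E t ≤ ∑' s, (if s = o then 0 else d t s) * M := by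
          refine ENNReal.tsum_le_tsum fun s => ?_
          split_ifs with hs
          · simp [hs, hfo]
          · exact mul_le_mul_right (hfM s) _
      _ ≤ M * (1 - d t o) := by
          rw [ENNReal.tsum_mul_right, mul_comm]
          gcongr
          exact tsum_ite_eq_zero_le_one_sub (tsum_markovDist_le_one hstep s0 t) o
  have htelescope : ∀ T, f s0 ≤ ∑ t ∈ Finset.range T, (1 - d t o) + E T := by
    intro T
    induction T with
    | zero => simp [E, d, tsum_markovDist_zero_mul]
    | succ T ih =>
      rw [Finset.sum_range_succ, add_assoc]
      exact ih.trans (by gcongr; exact hE_succ T)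
  by_cases htop : ∑' t, (1 - d t o) = ⊤
  · exact htop ▸ le_top
  have hlim : Tendsto (fun T => ∑' t, (1 - d t o) + M * (1 - d T o)) atTop
      (𝓝 (∑' t, (1 - d t o) + M * 0)) :=
    tendsto_const_nhds.add
      (ENNReal.Tendsto.const_mul (ENNReal.tendsto_atTop_zero_of_tsum_ne_top htop) (Or.inr hM))
  rw [mul_zero, add_zero] at hlim
  refine ge_of_tendsto' hlim fun T => ?_
  exact (htelescope T).trans (add_le_add (ENNReal.sum_le_tsum _) (hE_le T))

end MarkovChain

noncomputable def cliqueBirth (n : ℕ) (lam alpha : ℝ) (j : ℕ) : ℝ :=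
  lam * (j : ℝ) ^ (1 + alpha) * ((n : ℝ) - j)

noncomputable def cliqueWeight (n : ℕ) (lam alpha : ℝ) (m i : ℕ) : ℝ :=
  ∏ j ∈ Finset.Ico (i + 1) m, cliqueBirth n lam alpha j / j

/-- The scale function of the chain below level `m`, normalised so that its last increment
is `1`. -/
noncomputable def cliquePotential (n : ℕ) (lam alpha : ℝ) (m k : ℕ) : ℝ :=
  ∑ i ∈ Finset.range (min k m), cliqueWeight n lam alpha m i

section CliqueChain

variable {n m : ℕ} {lam alpha : ℝ}

theorem cliqueBirth_nonneg (hlam : 0 ≤ lam) {j : ℕ} (hj : j ≤ n) :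
    0 ≤ cliqueBirth n lam alpha j := by
  have hj' : (j : ℝ) ≤ n := by exact_mod_cast hj
  unfold cliqueBirth
  exact mul_nonneg (by positivity) (sub_nonneg.2 hj')

theorem cliqueStep_of_mem {s : ℕ} (hs : 1 ≤ s) (hsn : s ≤ n) (J : ℕ) :
    cliqueStep n lam alpha s J =
      if J = s + 1 then
        ENNReal.ofReal (cliqueBirth n lam alpha s / (cliqueBirth n lam alpha s + s))
      else if J = s - 1 then ENNReal.ofReal (s / (cliqueBirth n lam alpha s + s))
      else 0 := by
  rw [cliqueStep, if_neg (by omega)]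
  rfl

theorem tsum_cliqueStep_mul {s : ℕ} (hs : 1 ≤ s) (hsn : s ≤ n) (g : ℕ → ℝ≥0∞) :
    ∑' J, cliqueStep n lam alpha s J * g J =
      ENNReal.ofReal (cliqueBirth n lam alpha s / (cliqueBirth n lam alpha s + s)) * g (s + 1) +
        ENNReal.ofReal (s / (cliqueBirth n lam alpha s + s)) * g (s - 1) := by
  rw [tsum_eq_sum (s := {s + 1, s - 1}) fun J hJ => ?_, Finset.sum_pair (by omega)]
  · simp [cliqueStep_of_mem hs hsn, show s - 1 ≠ s + 1 by omega]
  · simp only [Finset.mem_insert, Finset.mem_singleton, not_or] at hJ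
    simp [cliqueStep_of_mem hs hsn, hJ.1, hJ.2]

theorem tsum_cliqueStep_mul_of_not_mem {s : ℕ} (hs : s = 0 ∨ n < s) (g : ℕ → ℝ≥0∞) :
    ∑' J, cliqueStep n lam alpha s J * g J = g s := by
  simp [cliqueStep, hs, ite_mul]

theorem tsum_cliqueStep_le_one (hlam : 0 ≤ lam) (s : ℕ) :
    ∑' J, cliqueStep n lam alpha s J ≤ 1 := by
  by_cases hs : s = 0 ∨ n < s
  · simpa using (tsum_cliqueStep_mul_of_not_mem (lam := lam) (alpha := alpha) hs 1).le
  simp only [not_or, not_lt] at hs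
  obtain ⟨hs0, hsn⟩ := hs
  have hs1 : 1 ≤ s := Nat.one_le_iff_ne_zero.2 hs0
  have hb := cliqueBirth_nonneg (alpha := alpha) hlam hsn
  have hpos : 0 < cliqueBirth n lam alpha s + s := by
    have : (1 : ℝ) ≤ s := by exact_mod_cast hs1
    linarith
  have h := tsum_cliqueStep_mul (lam := lam) (alpha := alpha) hs1 hsn 1
  simp only [Pi.one_apply, mul_one] at h
  rw [h, ← ENNReal.ofReal_add (by positivity) (by positivity), ← add_div, div_self hpos.ne',
    ENNReal.ofReal_one]

theorem cliqueWeight_of_le {i : ℕ} (h : m ≤ i + 1) : cliqueWeight n lam alpha m i = 1 := by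
  rw [cliqueWeight, Finset.Ico_eq_empty (by omega), Finset.prod_empty]

theorem natCast_mul_cliqueWeight_pred {s : ℕ} (hs : 1 ≤ s) (hsm : s < m) :
    s * cliqueWeight n lam alpha m (s - 1) =
      cliqueBirth n lam alpha s * cliqueWeight n lam alpha m s := by
  have hs0 : (s : ℝ) ≠ 0 := by positivity
  rw [cliqueWeight, Nat.sub_add_cancel hs, Finset.prod_eq_prod_Ico_succ_bot hsm, cliqueWeight]
  field_simp

theorem cliquePotential_succ (k : ℕ) :
    cliquePotential n lam alpha m (k + 1) =
      cliquePotential n lam alpha m k + if k < m then cliqueWeight n lam alpha m k else 0 := by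
  unfold cliquePotential
  split_ifs with hk
  · rw [min_eq_left hk, min_eq_left hk.le, Finset.sum_range_succ]
  · rw [min_eq_right (by omega), min_eq_right (by omega), add_zero]

theorem cliquePotential_min (k : ℕ) :
    cliquePotential n lam alpha m (min k m) = cliquePotential n lam alpha m k := by
  rw [cliquePotential, cliquePotential, min_assoc, min_self]

theorem cliquePotential_increment_le {s : ℕ} (hs : 1 ≤ s) :
    s * (cliquePotential n lam alpha m s - cliquePotential n lam alpha m (s - 1)) ≤
      s + cliqueBirth n lam alpha s *
        (cliquePotential n lam alpha m (s + 1) - cliquePotential n lam alpha m s) := by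
  have hlow := cliquePotential_succ (n := n) (lam := lam) (alpha := alpha) (m := m) (s - 1)
  rw [Nat.sub_add_cancel hs] at hlow
  rw [sub_eq_of_eq_add' hlow, sub_eq_of_eq_add' (cliquePotential_succ s)]
  rcases lt_trichotomy s m with hsm | rfl | hsm
  · rw [if_pos (by omega), if_pos hsm, natCast_mul_cliqueWeight_pred hs hsm]
    simp
  · rw [if_pos (by omega), if_neg (lt_irrefl _), cliqueWeight_of_le (by omega)]
    simp
  · rw [if_neg (by omega), if_neg (by omega)]
    simp

theorem cliquePotential_le_one_add (hlam : 0 ≤ lam) {s : ℕ} (hs : 1 ≤ s) (hsn : s ≤ n) :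
    cliquePotential n lam alpha m s ≤
      1 + cliqueBirth n lam alpha s / (cliqueBirth n lam alpha s + s) *
          cliquePotential n lam alpha m (s + 1) +
        s / (cliqueBirth n lam alpha s + s) * cliquePotential n lam alpha m (s - 1) := by
  have hincr := cliquePotential_increment_le (n := n) (m := m) (lam := lam) (alpha := alpha) hs
  have hb := cliqueBirth_nonneg (alpha := alpha) hlam hsn
  set b := cliqueBirth n lam alpha s
  set F := cliquePotential n lam alpha m
  have hpos : 0 < b + s := by
    have : (1 : ℝ) ≤ s := by exact_mod_cast hs
    linarith
  calc F s = F s * (b + s) / (b + s) := by field_simp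
    _ ≤ ((b + s) + b * F (s + 1) + s * F (s - 1)) / (b + s) := by gcongr; nlinarith
    _ = _ := by field_simp

theorem cliqueWeight_le_cliqueET (hlam : 0 ≤ lam) (hm : 1 ≤ m) :
    ENNReal.ofReal (cliqueWeight n lam alpha m 0) ≤ cliqueET n lam alpha 1 := by
  set F := cliquePotential n lam alpha m
  have hF1 : F 1 = cliqueWeight n lam alpha m 0 := by simp [F, cliquePotential, min_eq_left hm]
  rw [← hF1]
  refine le_tsum_one_sub_markovDist (tsum_cliqueStep_le_one hlam)
    (f := fun k => ENNReal.ofReal (F k)) (M := ∑ k ∈ Finset.range (m + 1), ENNReal.ofReal (F k))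
    (by simp) (fun k => ?_) (by simp [F, cliquePotential]) (fun s hs => ?_) 1
  · rw [← show F (min k m) = F k from cliquePotential_min k]
    exact Finset.single_le_sum (f := fun k => ENNReal.ofReal (F k)) (fun _ _ => zero_le)
      (Finset.mem_range.2 (by omega))
  by_cases hsn : n < s
  · rw [tsum_cliqueStep_mul_of_not_mem (Or.inr hsn)]
    exact le_add_self
  replace hs : 1 ≤ s := Nat.one_le_iff_ne_zero.2 hs
  replace hsn : s ≤ n := not_lt.1 hsn
  have hb := cliqueBirth_nonneg (alpha := alpha) hlam hsn
  rw [tsum_cliqueStep_mul hs hsn]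
  refine (ENNReal.ofReal_le_ofReal (cliquePotential_le_one_add hlam hs hsn)).trans ?_
  refine ENNReal.ofReal_add_le.trans (add_le_add ENNReal.ofReal_add_le le_rfl) |>.trans ?_
  rw [ENNReal.ofReal_one, ENNReal.ofReal_mul (by positivity), ENNReal.ofReal_mul (by positivity),
    add_assoc]

end CliqueChain

theorem div_exp_one_pow_le_factorial (N : ℕ) : ((N : ℝ) / Real.exp 1) ^ N ≤ N.factorial := by
  have h := Real.pow_div_factorial_le_exp _ (Nat.cast_nonneg N) N
  rw [div_le_iff₀ (by positivity)] at h
  rw [div_pow, Real.exp_one_pow, div_le_iff₀ (by positivity), mul_comm]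
  exact h

section CliqueWeightBound

variable {n : ℕ} {lam alpha : ℝ}

theorem cliqueBirth_div_natCast {j : ℕ} (hj : 0 < j) :
    cliqueBirth n lam alpha j / j = lam * (j : ℝ) ^ alpha * ((n : ℝ) - j) := by
  have hj' : (0 : ℝ) < j := by exact_mod_cast hj
  rw [cliqueBirth, Real.rpow_add hj', Real.rpow_one]
  field_simp

theorem pow_mul_factorial_rpow_le_cliqueWeight (hlam : 0 ≤ lam) {N : ℕ}
    (hN : 2 * (N + 1) ≤ n) :
    (lam * n / 2) ^ N * (N.factorial : ℝ) ^ alpha ≤ cliqueWeight n lam alpha (N + 1) 0 := by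
  calc (lam * n / 2) ^ N * (N.factorial : ℝ) ^ alpha
      = ∏ j ∈ Finset.Ico 1 (N + 1), (lam * n / 2 * (j : ℝ) ^ alpha) := by
        rw [Finset.prod_mul_distrib, Finset.prod_const, Nat.card_Ico, Nat.add_sub_cancel,
          Real.finsetProd_rpow _ _ fun _ _ => Nat.cast_nonneg _, ← Nat.cast_prod,
          Finset.prod_Ico_id_eq_factorial]
    _ ≤ ∏ j ∈ Finset.Ico 1 (N + 1), cliqueBirth n lam alpha j / j := by
        refine Finset.prod_le_prod (fun j _ => by positivity) fun j hj => ?_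
        rw [Finset.mem_Ico] at hj
        have hjn : 2 * (j : ℝ) ≤ n := by exact_mod_cast (by omega : 2 * j ≤ n)
        rw [cliqueBirth_div_natCast hj.1]
        calc lam * n / 2 * (j : ℝ) ^ alpha = lam * (j : ℝ) ^ alpha * (n / 2) := by ring
          _ ≤ lam * (j : ℝ) ^ alpha * (n - j) := by gcongr; linarith
    _ = cliqueWeight n lam alpha (N + 1) 0 := rfl

theorem pos_of_log_rpow_le {n : ℕ} {lam alpha : ℝ} (hn : 1 < n)
    (hlam : Real.log n ^ alpha ≤ lam * (n : ℝ) ^ (1 + alpha)) : 0 < lam := by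
  have hL : 0 < Real.log n := Real.log_pos (by exact_mod_cast hn)
  have h := (Real.rpow_pos_of_pos hL alpha).trans_le hlam
  exact (pos_iff_pos_of_mul_pos h).mpr (Real.rpow_pos_of_pos (by positivity) _)

theorem two_rpow_le_cliqueWeight (ha : 0 ≤ alpha) (hn : 8 ≤ n)
    (hlog : 4 ≤ (Real.log n / (4 * Real.exp 1)) ^ alpha)
    (hlam : Real.log n ^ alpha ≤ lam * (n : ℝ) ^ (1 + alpha)) :
    (2 : ℝ) ^ ((1 / 4 : ℝ) * n) ≤ cliqueWeight n lam alpha (n / 2) 0 := by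
  obtain ⟨N, hN⟩ : ∃ N, n / 2 = N + 1 := ⟨n / 2 - 1, by omega⟩
  have h4N : (n : ℝ) ≤ 4 * N := by exact_mod_cast (by omega : n ≤ 4 * N)
  have hn0 : (0 : ℝ) < n := by positivity
  have hlam0 : 0 ≤ lam := (pos_of_log_rpow_le (by omega) hlam).le
  set L := Real.log n
  have hL : 0 < L := Real.log_pos (by exact_mod_cast (by omega : 1 < n))
  have hLa : L ^ alpha ≤ lam * n * (n : ℝ) ^ alpha := by
    rwa [mul_assoc, ← Real.rpow_one_add' hn0.le (by positivity)]
  have hbase : 2 ≤ lam * n / 2 * (N / Real.exp 1) ^ alpha :=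
    calc (2 : ℝ) ≤ (L / (4 * Real.exp 1)) ^ alpha / 2 := by linarith
      _ ≤ (L * N / (Real.exp 1 * n)) ^ alpha / 2 := by
          gcongr ?_ ^ alpha / 2
          rw [div_le_div_iff₀ (by positivity) (by positivity)]
          nlinarith [mul_le_mul_of_nonneg_left h4N (mul_nonneg hL.le (Real.exp_pos 1).le)]
      _ = L ^ alpha / (n : ℝ) ^ alpha * (N / Real.exp 1) ^ alpha / 2 := by
          rw [← Real.div_rpow hL.le hn0.le, ← Real.mul_rpow (by positivity) (by positivity)]
          field_simp
      _ ≤ lam * n * (N / Real.exp 1) ^ alpha / 2 := by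
          gcongr
          rwa [div_le_iff₀ (by positivity)]
      _ = lam * n / 2 * (N / Real.exp 1) ^ alpha := by ring
  calc (2 : ℝ) ^ ((1 / 4 : ℝ) * n) ≤ 2 ^ (N : ℝ) := by
        gcongr
        · norm_num
        · linarith
    _ = 2 ^ N := Real.rpow_natCast 2 N
    _ ≤ (lam * n / 2 * (N / Real.exp 1) ^ alpha) ^ N := by gcongr
    _ = (lam * n / 2) ^ N * (((N : ℝ) / Real.exp 1) ^ N) ^ alpha := by
        rw [mul_pow, ← Real.rpow_mul_natCast (by positivity), mul_comm alpha,
          Real.rpow_natCast_mul (by positivity)]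
    _ ≤ (lam * n / 2) ^ N * (N.factorial : ℝ) ^ alpha := by
        gcongr
        exact div_exp_one_pow_le_factorial N
    _ ≤ cliqueWeight n lam alpha (n / 2) 0 :=
        hN ▸ pow_mul_factorial_rpow_le_cliqueWeight hlam0 (by omega)

end CliqueWeightBound

theorem clique_superlinear_survival_lower_general (alpha : ℝ) (ha : 0 < alpha)
    (lam : ℕ → ℝ)
    (hcond : Tendsto (fun n : ℕ =>
      lam n * (n : ℝ) ^ (1 + alpha) / Real.log n ^ alpha) atTop atTop) :
    ∃ c : ℝ, 0 < c ∧ ∀ᶠ n : ℕ in atTop,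
      ENNReal.ofReal ((2 : ℝ) ^ (c * n)) ≤ cliqueET n (lam n) alpha 1 := by
  have hlog : Tendsto (fun n : ℕ => (Real.log n / (4 * Real.exp 1)) ^ alpha) atTop atTop :=
    (tendsto_rpow_atTop ha).comp
      ((Real.tendsto_log_atTop.comp tendsto_natCast_atTop_atTop).atTop_div_const (by positivity))
  refine ⟨1 / 4, by norm_num, ?_⟩
  filter_upwards [hcond.eventually_ge_atTop 1, hlog.eventually_ge_atTop 4, eventually_ge_atTop 8]
    with n hlam hlogn hn
  rw [one_le_div (Real.rpow_pos_of_pos (Real.log_pos (by exact_mod_cast (by omega : 1 < n))) _)]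
    at hlam
  calc ENNReal.ofReal ((2 : ℝ) ^ ((1 / 4 : ℝ) * n))
      ≤ ENNReal.ofReal (cliqueWeight n (lam n) alpha (n / 2) 0) :=
        ENNReal.ofReal_le_ofReal (two_rpow_le_cliqueWeight ha.le hn hlogn hlam)
    _ ≤ cliqueET n (lam n) alpha 1 :=
        cliqueWeight_le_cliqueET (pos_of_log_rpow_le (by omega) hlam).le (by omega)

/-- For super-linear scaling with λ ∈ ω(n^{-1-α} log(n)^α), the expected
survival time of the clique infection chain started at 1 is at least 2^{cn}. -/
theorem clique_superlinear_survival_lower (alpha : ℝ) (ha : 0 < alpha)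
    (lam : ℕ → ℝ) (hpos : ∀ n, 0 < lam n)
    (hcond : Tendsto (fun n : ℕ =>
      lam n * (n : ℝ) ^ (1 + alpha) / Real.log n ^ alpha) atTop atTop) :
    ∃ c : ℝ, 0 < c ∧ ∀ᶠ n : ℕ in atTop,
      ENNReal.ofReal ((2 : ℝ) ^ (c * n)) ≤ cliqueET n (lam n) alpha 1 :=
  clique_superlinear_survival_lower_general alpha ha lam hcond
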